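/- arXiv:1204.1438 — 5 statements merged into one kernel-verified Lean document; each statement's English description precedes it below -/
import Mathlib

section
/- For any graph G of order n, γ(G) = γ_R(G) if and only if G has no edges (i.e., G is the empty graph on n vertices). -/
open SimpleGraph Finset

/-- A Roman dominating function: values in {0,1,2}, every 0-vertex has a neighbor with value 2. -/
def IsRDF {V : Type*} (G : SimpleGraph V) (f : V → ℕ) : Prop :=
  (∀ v, f v ≤ 2) ∧ ∀ v, f v = 0 → ∃ u, G.Adj v u ∧ f u = 2

/-- The Roman domination number: minimum weight of a Roman dominating function. -/
noncomputable def romanDom {V : Type*} [Fintype V] (G : SimpleGraph V) : ℕ :=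
  sInf {k | ∃ f : V → ℕ, IsRDF G f ∧ ∑ v, f v = k}

/-- A dominating set. -/
def IsDomSet {V : Type*} (G : SimpleGraph V) (S : Set V) : Prop :=
  ∀ v, v ∈ S ∨ ∃ u ∈ S, G.Adj u v

/-- The domination number. -/
noncomputable def domNum {V : Type*} [Fintype V] (G : SimpleGraph V) : ℕ :=
  sInf {k | ∃ S : Set V, IsDomSet G S ∧ S.ncard = k}

/-- Degree of a vertex. -/
noncomputable def deg {V : Type*} (G : SimpleGraph V) (v : V) : ℕ :=
  (G.neighborSet v).ncard

/-- Maximum degree. -/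
noncomputable def maxDeg {V : Type*} (G : SimpleGraph V) : ℕ :=
  sSup {d | ∃ v, deg G v = d}

/-- Minimum degree. -/
noncomputable def minDeg {V : Type*} (G : SimpleGraph V) : ℕ :=
  sInf {d | ∃ v, deg G v = d}

/-- The Roman bondage number: minimum size of an edge set whose deletion increases `romanDom`. -/
noncomputable def romanBondage {V : Type*} [Fintype V] (G : SimpleGraph V) : ℕ :=
  sInf {k | ∃ B : Set (Sym2 V), B ⊆ G.edgeSet ∧
    romanDom (G.deleteEdges B) > romanDom G ∧ B.ncard = k}

/-- The bondage number: minimum size of an edge set whose deletion increases `domNum`. -/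
noncomputable def bondage {V : Type*} [Fintype V] (G : SimpleGraph V) : ℕ :=
  sInf {k | ∃ B : Set (Sym2 V), B ⊆ G.edgeSet ∧
    domNum (G.deleteEdges B) > domNum G ∧ B.ncard = k}

/-- A vertex cover. -/
def IsVC {V : Type*} (G : SimpleGraph V) (S : Set V) : Prop :=
  ∀ u v, G.Adj u v → u ∈ S ∨ v ∈ S

/-- The vertex covering number. -/
noncomputable def vcNum {V : Type*} [Fintype V] (G : SimpleGraph V) : ℕ :=
  sInf {k | ∃ S : Set V, IsVC G S ∧ S.ncard = k}

/-!
Writing `V₁`, `V₂` for the vertices on which a Roman dominating function `f` takes the values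
`1` and `2`, the support `V₁ ∪ V₂` is a dominating set of size `w(f) - |V₂|`, so `γ ≤ γ_R`, and
strictly so when `V₂ ≠ ∅`. If `V₂ = ∅` then `f ≡ 1` has weight `n`, while as soon as `G` has an
edge `ab` the set `V \ {a}` dominates, so `γ ≤ n - 1`. For the edgeless graph only `V` itself
dominates, so `γ = n ≥ γ_R`.
-/

namespace SimpleGraph

variable {V : Type*} {G : SimpleGraph V}

theorem IsRDF.isDomSet_support {f : V → ℕ} (hf : IsRDF G f) : IsDomSet G {v | f v ≠ 0} := by
  intro v
  by_cases hv : f v = 0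
  · obtain ⟨u, hvu, hu⟩ := hf.2 v hv
    exact Or.inr ⟨u, by simp [hu], hvu.symm⟩
  · exact Or.inl hv

theorem IsRDF.eq_one_of_forall_ne_two {f : V → ℕ} (hf : IsRDF G f) (h2 : ∀ v, f v ≠ 2) (v : V) :
    f v = 1 := by
  have hne : f v ≠ 0 := fun h0 => by
    obtain ⟨u, -, hu⟩ := hf.2 v h0
    exact h2 u hu
  have := hf.1 v
  have := h2 v
  omega

theorem isDomSet_compl_singleton {a b : V} (hab : G.Adj a b) : IsDomSet G {a}ᶜ := by
  intro v
  by_cases hv : v = a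
  · subst hv
    exact Or.inr ⟨b, hab.ne.symm, hab.symm⟩
  · exact Or.inl hv

theorem isDomSet_bot_iff {S : Set V} : IsDomSet (⊥ : SimpleGraph V) S ↔ S = Set.univ := by
  refine ⟨fun hS => Set.eq_univ_of_forall fun v => ?_, fun hS v => Or.inl (hS ▸ trivial)⟩
  simpa using hS v

theorem isRDF_one : IsRDF G fun _ => 1 :=
  ⟨fun _ => by norm_num, fun _ h => absurd h one_ne_zero⟩

variable [Fintype V]

theorem IsDomSet.domNum_le {S : Set V} (hS : IsDomSet G S) : domNum G ≤ S.ncard :=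
  Nat.sInf_le ⟨S, hS, rfl⟩

theorem IsRDF.romanDom_le {f : V → ℕ} (hf : IsRDF G f) : romanDom G ≤ ∑ v, f v :=
  Nat.sInf_le ⟨f, hf, rfl⟩

theorem exists_isRDF_sum_eq_romanDom : ∃ f, IsRDF G f ∧ ∑ v, f v = romanDom G :=
  Nat.sInf_mem (s := {k | ∃ f : V → ℕ, IsRDF G f ∧ ∑ v, f v = k}) ⟨_, _, isRDF_one, rfl⟩

theorem romanDom_le_card : romanDom G ≤ Fintype.card V := by
  simpa using (isRDF_one (G := G)).romanDom_le

theorem IsRDF.sum_eq_card_support_add_card [DecidableEq V] {f : V → ℕ} (hf : IsRDF G f) :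
    ∑ v, f v = #{v | f v ≠ 0} + #{v | f v = 2} := by
  simp only [Finset.card_filter, ← Finset.sum_add_distrib]
  refine Finset.sum_congr rfl fun v _ => ?_
  have := hf.1 v
  split_ifs <;> omega

theorem IsRDF.domNum_add_card_le [DecidableEq V] {f : V → ℕ} (hf : IsRDF G f) :
    domNum G + #{v | f v = 2} ≤ ∑ v, f v := by
  have hdom := hf.isDomSet_support.domNum_le
  rw [← Finset.coe_filter_univ, Set.ncard_coe_finset] at hdom
  rw [hf.sum_eq_card_support_add_card]
  omega

theorem domNum_le_romanDom : domNum G ≤ romanDom G := by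
  classical
  obtain ⟨f, hf, hsum⟩ := exists_isRDF_sum_eq_romanDom (G := G)
  exact hsum ▸ (Nat.le_add_right _ _).trans hf.domNum_add_card_le

theorem domNum_lt_sum_of_adj {f : V → ℕ} (hf : IsRDF G f) {a b : V} (hab : G.Adj a b) :
    domNum G < ∑ v, f v := by
  classical
  by_cases h2 : ∃ v, f v = 2
  · obtain ⟨v, hv⟩ := h2
    have : 0 < #{v | f v = 2} := Finset.card_pos.2 ⟨v, by simpa using hv⟩
    have := hf.domNum_add_card_le
    omega
  · push Not at h2
    have hdom := (isDomSet_compl_singleton hab).domNum_le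
    rw [Set.ncard_compl, Set.ncard_singleton, Nat.card_eq_fintype_card] at hdom
    have : 0 < Fintype.card V := Fintype.card_pos_iff.2 ⟨a⟩
    simp only [hf.eq_one_of_forall_ne_two h2, Finset.sum_const, Finset.card_univ, smul_eq_mul,
      mul_one]
    omega

theorem domNum_lt_romanDom (hG : G ≠ ⊥) : domNum G < romanDom G := by
  obtain ⟨a, b, hab⟩ := ne_bot_iff_exists_adj.1 hG
  obtain ⟨f, hf, hsum⟩ := exists_isRDF_sum_eq_romanDom (G := G)
  exact hsum ▸ domNum_lt_sum_of_adj hf hab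

theorem domNum_bot : domNum (⊥ : SimpleGraph V) = Fintype.card V := by
  have huniv : IsDomSet (⊥ : SimpleGraph V) Set.univ := isDomSet_bot_iff.2 rfl
  refine le_antisymm ?_ (le_csInf ⟨_, _, huniv, rfl⟩ ?_)
  · simpa using huniv.domNum_le
  · rintro k ⟨S, hS, rfl⟩
    simp [isDomSet_bot_iff.1 hS]

end SimpleGraph

theorem stmt1 {V : Type*} [Fintype V] (G : SimpleGraph V) :
    domNum G = romanDom G ↔ G = ⊥ := by
  refine ⟨fun h => by_contra fun hG => (domNum_lt_romanDom hG).ne h, ?_⟩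
  rintro rfl
  exact le_antisymm domNum_le_romanDom (romanDom_le_card.trans domNum_bot.ge)
end

section
/- If G is a graph of order n with at least one vertex, then γ_R(G) ≤ n − Δ(G) + 1, where Δ(G) is the maximum degree of G. -/
open SimpleGraph Finset

/-!
Put the value 2 on a vertex `v` of maximum degree, 0 on its neighbours and 1 everywhere else.
Every 0 is then adjacent to the 2, and the weight is `2 + (n - 1 - Δ) = n - Δ + 1`.
-/

section RomanDomination

variable {V : Type*} (G : SimpleGraph V)

lemma deg_eq_degree (v : V) [Fintype (G.neighborSet v)] : deg G v = G.degree v := by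
  rw [deg, Set.ncard_eq_toFinset_card', ← card_neighborSet_eq_degree, Set.toFinset_card]

lemma exists_deg_eq_maxDeg [Finite V] [Nonempty V] : ∃ v, deg G v = maxDeg G :=
  (Set.range_nonempty (deg G)).csSup_mem (Set.finite_range _)

lemma romanDom_le_sum [Fintype V] {f : V → ℕ} (hf : IsRDF G f) : romanDom G ≤ ∑ v, f v :=
  Nat.sInf_le ⟨f, hf, rfl⟩

variable [DecidableEq V] [DecidableRel G.Adj]

def starRDF (v u : V) : ℕ :=
  if u = v then 2 else if G.Adj v u then 0 else 1

lemma isRDF_starRDF (v : V) : IsRDF G (starRDF G v) := by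
  refine ⟨fun u => by unfold starRDF; split_ifs <;> omega, fun u hu => ⟨v, ?_, by simp [starRDF]⟩⟩
  unfold starRDF at hu
  split_ifs at hu with huv hadj
  exact hadj.symm

-- Stated additively, so that no truncated subtraction occurs.
lemma sum_starRDF_add_degree [Fintype V] (v : V) :
    ∑ u, starRDF G v u + G.degree v = Fintype.card V + 1 := by
  have hpoint : ∀ u, starRDF G v u + (if G.Adj v u then 1 else 0) = 1 + if u = v then 1 else 0 := by
    intro u
    by_cases huv : u = v
    · simp [starRDF, huv]
    · by_cases hadj : G.Adj v u <;> simp [starRDF, huv, hadj]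
  have hsum := Finset.sum_congr rfl fun u (_ : u ∈ univ) => hpoint u
  rw [sum_add_distrib, sum_add_distrib, sum_boole, sum_boole, ← neighborFinset_eq_filter,
    card_neighborFinset_eq_degree] at hsum
  simpa [filter_eq'] using hsum

end RomanDomination

theorem stmt2 {V : Type*} [Fintype V] [Nonempty V] (G : SimpleGraph V) :
    romanDom G ≤ Fintype.card V - maxDeg G + 1 := by
  classical
  obtain ⟨v, hv⟩ := exists_deg_eq_maxDeg G
  have hweight := sum_starRDF_add_degree G v
  rw [← hv, deg_eq_degree]
  calc romanDom G ≤ ∑ u, starRDF G v u := romanDom_le_sum G (isRDF_starRDF G v)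
    _ ≤ Fintype.card V - G.degree v + 1 := by omega
end

section
/- Let G be a graph of order n with maximum degree at least two, and let H be a spanning subgraph of G with γ_R(H) = γ_R(G) and Δ(H) ≥ 2. If K = E(G) − E(H), then b_R(H) ≤ b_R(G) ≤ b_R(H) + |K|. -/
open SimpleGraph Finset

/-!
Both inequalities compare minimum bondage sets. If deleting `B` from `G` raises `γ_R`, then so
does deleting `B ∩ E(H)` from `H`: `H - B` is a spanning subgraph of `G - B`, and
`γ_R(H) = γ_R(G)`. Conversely, if deleting `B` from `H` raises `γ_R`, then deleting `B ∪ K` from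
`G` leaves exactly `H - B`, and `γ_R(H) ≥ γ_R(G)` holds for every spanning subgraph.
Minimum bondage sets exist because `Δ ≥ 2` gives `γ_R < n = γ_R(G - E(G))`.
-/

section

variable {V : Type*} {G H : SimpleGraph V}

lemma exists_lt_deg_of_lt_maxDeg {k : ℕ} (h : k < maxDeg G) :
    ∃ v, k < deg G v := by
  by_contra! hle
  exact h.not_ge (csSup_le' (by rintro _ ⟨v, rfl⟩; exact hle v))

lemma exists_adj_adj_ne_of_two_le_maxDeg (h : 2 ≤ maxDeg G) :
    ∃ v u₁ u₂, G.Adj v u₁ ∧ G.Adj v u₂ ∧ u₁ ≠ u₂ := by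
  obtain ⟨v, hv⟩ := exists_lt_deg_of_lt_maxDeg h
  obtain ⟨⟨u₁, hu₁, u₂, hu₂, hne⟩, -⟩ := Set.one_lt_ncard_iff_nontrivial_and_finite.mp hv
  exact ⟨v, u₁, u₂, hu₁, hu₂, hne⟩

lemma IsRDF.mono {f : V → ℕ} (hle : H ≤ G) (hf : IsRDF H f) : IsRDF G f :=
  ⟨hf.1, fun v hv => (hf.2 v hv).imp fun _ hu => ⟨hle hu.1, hu.2⟩⟩

variable [Fintype V]

lemma romanDom_le {f : V → ℕ} (hf : IsRDF G f) : romanDom G ≤ ∑ v, f v :=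
  Nat.sInf_le ⟨f, hf, rfl⟩

lemma exists_isRDF_sum_eq_romanDom (G : SimpleGraph V) :
    ∃ f, IsRDF G f ∧ ∑ v, f v = romanDom G :=
  Nat.sInf_mem (s := {k | ∃ f : V → ℕ, IsRDF G f ∧ ∑ v, f v = k})
    ⟨_, fun _ => 2, ⟨fun _ => le_rfl, fun _ h => absurd h two_ne_zero⟩, rfl⟩

lemma romanDom_anti (hle : H ≤ G) : romanDom G ≤ romanDom H := by
  obtain ⟨f, hf, hsum⟩ := exists_isRDF_sum_eq_romanDom H
  exact hsum ▸ romanDom_le (hf.mono hle)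

lemma romanDom_bot : romanDom (⊥ : SimpleGraph V) = Fintype.card V := by
  refine le_antisymm ?_ ?_
  · simpa using romanDom_le (G := ⊥) (f := fun _ => 1)
      ⟨fun _ => one_le_two, fun _ h => absurd h one_ne_zero⟩
  · obtain ⟨f, hf, hsum⟩ := exists_isRDF_sum_eq_romanDom (⊥ : SimpleGraph V)
    have hpos : ∀ v, 1 ≤ f v := fun v =>
      Nat.one_le_iff_ne_zero.mpr fun h => by simpa using hf.2 v h
    simpa [← hsum] using Finset.sum_le_sum fun v (_ : v ∈ univ) => hpos v

/-- The function `2` at `v`, `0` at two of its neighbours and `1` elsewhere is Roman dominating. -/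
lemma romanDom_add_one_le_card {v u₁ u₂ : V} (h₁ : G.Adj v u₁) (h₂ : G.Adj v u₂)
    (hne : u₁ ≠ u₂) : romanDom G + 1 ≤ Fintype.card V := by
  classical
  let f : V → ℕ := fun w => if w = u₁ ∨ w = u₂ then 0 else if w = v then 2 else 1
  have hfv : f v = 2 := by simp [f, h₁.ne, h₂.ne]
  have hf : IsRDF G f := by
    refine ⟨fun w => by simp only [f]; split_ifs <;> omega, fun w hw => ?_⟩
    have : w = u₁ ∨ w = u₂ := by
      by_contra hw'
      simp only [f, if_neg hw'] at hw
      split_ifs at hw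
    rcases this with rfl | rfl
    exacts [⟨v, h₁.symm, hfv⟩, ⟨v, h₂.symm, hfv⟩]
  -- summed over `w`, this reads `∑ f + 2 = n + 1`
  have hpt : ∀ w, f w + ((if w = u₁ then 1 else 0) + if w = u₂ then 1 else 0) =
      1 + if w = v then 1 else 0 := by
    intro w
    simp only [f]
    split_ifs <;> simp_all [h₁.ne, h₂.ne]
  have hsum := Finset.sum_congr rfl fun w (_ : w ∈ univ) => hpt w
  simp only [Finset.sum_add_distrib, Finset.sum_ite_eq', Finset.mem_univ, if_true,
    Finset.sum_const, Finset.card_univ, smul_eq_mul, mul_one] at hsum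
  have := romanDom_le hf
  omega

lemma romanDom_lt_card (hΔ : 2 ≤ maxDeg G) : romanDom G < Fintype.card V := by
  obtain ⟨v, u₁, u₂, h₁, h₂, hne⟩ := exists_adj_adj_ne_of_two_le_maxDeg hΔ
  exact romanDom_add_one_le_card h₁ h₂ hne

lemma romanBondage_le {B : Set (Sym2 V)} (hB : B ⊆ G.edgeSet)
    (hlt : romanDom G < romanDom (G.deleteEdges B)) : romanBondage G ≤ B.ncard :=
  Nat.sInf_le ⟨B, hB, hlt, rfl⟩

lemma exists_ncard_eq_romanBondage (hΔ : 2 ≤ maxDeg G) :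
    ∃ B ⊆ G.edgeSet, romanDom G < romanDom (G.deleteEdges B) ∧ B.ncard = romanBondage G :=
  Nat.sInf_mem (s := {k | ∃ B : Set (Sym2 V), B ⊆ G.edgeSet ∧
      romanDom (G.deleteEdges B) > romanDom G ∧ B.ncard = k}) ⟨_, G.edgeSet, subset_rfl, by
    rw [deleteEdges_eq_bot.mpr subset_rfl, romanDom_bot]
    exact romanDom_lt_card hΔ, rfl⟩

lemma romanBondage_le_of_le_of_romanDom_eq (hle : H ≤ G) (hΔ : 2 ≤ maxDeg G)
    (hγ : romanDom H = romanDom G) : romanBondage H ≤ romanBondage G := by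
  obtain ⟨B, -, hlt, hB⟩ := exists_ncard_eq_romanBondage hΔ
  have hlt' : romanDom H < romanDom (H.deleteEdges (B ∩ H.edgeSet)) := by
    rw [← deleteEdges_eq_inter_edgeSet, hγ]
    exact hlt.trans_le (romanDom_anti (deleteEdges_mono hle))
  calc romanBondage H ≤ (B ∩ H.edgeSet).ncard := romanBondage_le Set.inter_subset_right hlt'
    _ ≤ B.ncard := Set.ncard_le_ncard Set.inter_subset_left
    _ = romanBondage G := hB

lemma romanBondage_le_add_ncard_sdiff (hle : H ≤ G) (hΔ : 2 ≤ maxDeg H) :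
    romanBondage G ≤ romanBondage H + (G.edgeSet \ H.edgeSet).ncard := by
  obtain ⟨B, hBH, hlt, hB⟩ := exists_ncard_eq_romanBondage hΔ
  have hdel : G.deleteEdges ((G.edgeSet \ H.edgeSet) ∪ B) = H.deleteEdges B := by
    rw [← deleteEdges_deleteEdges, deleteEdges_sdiff_eq_of_le hle]
  have hsub : (G.edgeSet \ H.edgeSet) ∪ B ⊆ G.edgeSet :=
    Set.union_subset Set.sdiff_subset (hBH.trans (edgeSet_mono hle))
  calc romanBondage G ≤ ((G.edgeSet \ H.edgeSet) ∪ B).ncard :=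
        romanBondage_le hsub (by rw [hdel]; exact (romanDom_anti hle).trans_lt hlt)
    _ ≤ (G.edgeSet \ H.edgeSet).ncard + B.ncard := Set.ncard_union_le _ _
    _ = romanBondage H + (G.edgeSet \ H.edgeSet).ncard := by rw [hB, add_comm]

end

theorem stmt5 {V : Type*} [Fintype V] (G H : SimpleGraph V)
    (hsub : H ≤ G) (hΔG : 2 ≤ maxDeg G) (hΔH : 2 ≤ maxDeg H)
    (hγ : romanDom H = romanDom G) (K : Set (Sym2 V))
    (hK : K = G.edgeSet \ H.edgeSet) :
    romanBondage H ≤ romanBondage G ∧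
      romanBondage G ≤ romanBondage H + K.ncard := by
  subst hK
  exact ⟨romanBondage_le_of_le_of_romanDom_eq hsub hΔG hγ,
    romanBondage_le_add_ncard_sdiff hsub hΔH⟩
end

section
/- For the path P_n on n ≥ 3 vertices, γ_R(P_n) = ⌈2n/3⌉. -/
open SimpleGraph Finset

private lemma sum_range_if_mod3 (n : ℕ) :
    ∑ i ∈ Finset.range n, (if i % 3 = 1 then 2 else 0) = 2 * ((n + 1) / 3) := by
  induction n with
  | zero => simp
  | succ n ih =>
    rw [Finset.sum_range_succ, ih]
    split_ifs <;> omega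

theorem stmt12 (n : ℕ) (hn : 3 ≤ n) :
    romanDom (SimpleGraph.pathGraph n) = (2 * n + 2) / 3 := by
  classical
  set G := SimpleGraph.pathGraph n with hG
  -- the explicit RDF giving the upper bound
  set g : ℕ → ℕ := fun i => if i % 3 = 1 then 2 else if n % 3 = 1 ∧ i = n - 1 then 1 else 0
    with hg
  have hgsum : ∑ i ∈ Finset.range n, g i = (2 * n + 2) / 3 := by
    have h1 : ∀ i ∈ Finset.range n, g i =
        (if i % 3 = 1 then 2 else 0) + (if n % 3 = 1 ∧ i = n - 1 then 1 else 0) := by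
      intro i hi
      simp only [hg]
      split_ifs with h1 h2 <;> omega
    rw [Finset.sum_congr rfl h1, Finset.sum_add_distrib, sum_range_if_mod3]
    have h2 : ∑ i ∈ Finset.range n, (if n % 3 = 1 ∧ i = n - 1 then 1 else 0)
        = if n % 3 = 1 then 1 else 0 := by
      by_cases hm : n % 3 = 1
      · simp only [hm, true_and]
        rw [Finset.sum_ite_eq' (Finset.range n) (n-1) (fun _ => 1)]
        simp [Finset.mem_range]; omega
      · simp [hm]
    rw [h2]
    split_ifs <;> omega
  set f : Fin n → ℕ := fun v => g v.val with hf
  have hfsum : ∑ v, f v = (2 * n + 2) / 3 := by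
    rw [hf, Fin.sum_univ_eq_sum_range, hgsum]
  have hRDF : IsRDF G f := by
    constructor
    · intro v; simp only [hf, hg]; split_ifs <;> omega
    · intro v hv
      simp only [hf, hg] at hv
      have hv3 : v.val % 3 ≠ 1 := by
        intro h; simp [h] at hv
      have hvlast : ¬ (n % 3 = 1 ∧ v.val = n - 1) := by
        intro h; rw [if_neg hv3, if_pos h] at hv; omega
      rcases Nat.lt_or_ge (v.val % 3) 1 with h0 | h2
      · -- v % 3 = 0, take v+1
        have h0 : v.val % 3 = 0 := by omega
        have hlt : v.val + 1 < n := by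
          rcases Nat.lt_or_ge (v.val + 1) n with h | h
          · exact h
          · exfalso
            have : v.val = n - 1 := by omega
            have : n % 3 = 1 := by omega
            exact hvlast ⟨this, by omega⟩
        refine ⟨⟨v.val + 1, hlt⟩, ?_, ?_⟩
        · rw [SimpleGraph.pathGraph_adj]; left; rfl
        · simp only [hf, hg]
          have : (v.val + 1) % 3 = 1 := by omega
          simp [this]
      · -- v % 3 = 2, take v-1
        have h2 : v.val % 3 = 2 := by omega
        have hge : 2 ≤ v.val := by omega
        refine ⟨⟨v.val - 1, by omega⟩, ?_, ?_⟩
        · rw [SimpleGraph.pathGraph_adj]; right; simp; omega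
        · simp only [hf, hg]
          have : (v.val - 1) % 3 = 1 := by omega
          simp [this]
  have hmem : (2 * n + 2) / 3 ∈ {k | ∃ f : Fin n → ℕ, IsRDF G f ∧ ∑ v, f v = k} :=
    ⟨f, hRDF, hfsum⟩
  -- lower bound: any RDF has weight at least (2n+2)/3
  have hlb : ∀ k ∈ {k | ∃ f : Fin n → ℕ, IsRDF G f ∧ ∑ v, f v = k}, (2 * n + 2) / 3 ≤ k := by
    rintro k ⟨f, ⟨hle, hdom⟩, rfl⟩
    set V0 := Finset.univ.filter (fun v => f v = 0) with hV0
    set V1 := Finset.univ.filter (fun v => f v = 1) with hV1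
    set V2 := Finset.univ.filter (fun v => f v = 2) with hV2
    have hcards : V0.card + V1.card + V2.card = n := by
      simp only [hV0, hV1, hV2, Finset.card_filter, ← Finset.sum_add_distrib]
      have : ∀ v : Fin n, ((if f v = 0 then 1 else 0) + (if f v = 1 then 1 else 0))
          + (if f v = 2 then 1 else 0) = 1 := by
        intro v; have := hle v; split_ifs <;> omega
      rw [Finset.sum_congr rfl (fun v _ => this v)]
      simp
    have hw : ∑ v, f v = V1.card + 2 * V2.card := by
      simp only [hV1, hV2, Finset.card_filter, Finset.mul_sum]
      rw [← Finset.sum_add_distrib]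
      refine Finset.sum_congr rfl fun v _ => ?_
      have := hle v; split_ifs <;> omega
    -- choice of dominator
    have hch : ∀ v : Fin n, f v = 0 → ∃ u, G.Adj v u ∧ f u = 2 := hdom
    choose w hw1 hw2 using hch
    set d : Fin n → Fin n := fun v => if h : f v = 0 then w v h else v with hd
    have hc0 : V0.card ≤ 2 * V2.card := by
      have hmap : ∀ v ∈ V0, d v ∈ V2 := by
        intro v hv
        simp only [hV0, Finset.mem_filter] at hv
        simp only [hV2, Finset.mem_filter, hd, dif_pos hv.2]
        exact ⟨Finset.mem_univ _, hw2 v hv.2⟩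
      rw [Finset.card_eq_sum_card_fiberwise hmap]
      have hfib : ∀ u ∈ V2, (V0.filter fun v => d v = u).card ≤ 2 := by
        intro u hu
        have : ((V0.filter fun v => d v = u)).card ≤ (Finset.univ : Finset Bool).card := by
          apply Finset.card_le_card_of_injOn (fun v => decide (v.val + 1 = u.val))
          · intro v _; exact Finset.mem_univ _
          · intro a ha b hb hab
            simp only [Finset.mem_coe, Finset.mem_filter, hV0] at ha hb
            obtain ⟨⟨-, ha0⟩, hda⟩ := ha
            obtain ⟨⟨-, hb0⟩, hdb⟩ := hb
            simp only [hd, dif_pos ha0] at hda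
            simp only [hd, dif_pos hb0] at hdb
            have hadja : G.Adj a u := hda ▸ hw1 a ha0
            have hadjb : G.Adj b u := hdb ▸ hw1 b hb0
            rw [hG, SimpleGraph.pathGraph_adj] at hadja hadjb
            simp only [decide_eq_decide] at hab
            apply Fin.ext
            omega
        simpa using this
      calc ∑ u ∈ V2, (V0.filter fun v => d v = u).card
          ≤ ∑ _u ∈ V2, 2 := Finset.sum_le_sum hfib
        _ = 2 * V2.card := by rw [Finset.sum_const]; ring
    omega
  have h1 : romanDom G ≤ (2 * n + 2) / 3 := Nat.sInf_le hmem
  have h2 : (2 * n + 2) / 3 ≤ romanDom G := le_csInf ⟨_, hmem⟩ hlb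
  omega
end

section
/- For the 2×n grid graph P_2 × P_n with n ≥ 1, γ_R(P_2 × P_n) = n + 1. -/
/-
Lower bound: if `f` is a Roman dominating function on the `2 × (m + 2)` ladder, restrict it to the
first `m` columns and raise to `1` every zero that has lost its only neighbour of value `2`. Such
zeros lie in column `m - 1`, next to a `2` in column `m`, and the last two columns carry weight at
least two more than the number of `2`s in column `m`; so the weight drops by at least `2`. The
ladders with one and two columns are covered by the general bound `2 |V| ≤ (Δ + 1) γ_R`.

Upper bound: put `2`s on the even columns in alternating rows, plus a single `1` when `n` is even.
-/

open SimpleGraph Finset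

section RomanDomination

variable {V : Type*} {G : SimpleGraph V} {f : V → ℕ}

theorem IsRDF.sum_eq [Fintype V] (hf : IsRDF G f) :
    ∑ v, f v = #{v | f v = 1} + 2 * #{v | f v = 2} := by
  simp only [card_filter, mul_sum, ← sum_add_distrib]
  refine sum_congr rfl fun v _ => ?_
  have := hf.1 v
  interval_cases f v <;> rfl

theorem IsRDF.card_le [Fintype V] (hf : IsRDF G f) {d : ℕ} (hd : ∀ v, deg G v ≤ d) :
    Fintype.card V ≤ #{v | f v = 1} + (d + 1) * #{v | f v = 2} := by
  classical
  have hzero : #{v | f v = 0} ≤ d * #{v | f v = 2} := calc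
    #{v | f v = 0} ≤ #(({v | f v = 2} : Finset V).biUnion fun u => {w | G.Adj u w}) := by
      refine card_le_card fun v hv => ?_
      obtain ⟨u, hvu, hu⟩ := hf.2 v (mem_filter.1 hv).2
      simpa using ⟨u, hu, hvu.symm⟩
    _ ≤ ∑ u ∈ {v | f v = 2}, #{w | G.Adj u w} := card_biUnion_le
    _ ≤ ∑ u ∈ ({v | f v = 2} : Finset V), d := sum_le_sum fun u _ => by
      rw [← Set.ncard_coe_finset, coe_filter_univ]
      exact hd u
    _ = d * #{v | f v = 2} := by rw [sum_const, smul_eq_mul, mul_comm]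
  calc Fintype.card V = #(univ : Finset V) := card_univ.symm
    _ ≤ #(({v | f v = 0} : Finset V) ∪ ({v | f v = 1} : Finset V) ∪
          ({v | f v = 2} : Finset V)) :=
      card_le_card fun v _ => by
        have := hf.1 v
        simp only [mem_union, mem_filter, mem_univ, true_and]
        omega
    _ ≤ #{v | f v = 0} + #{v | f v = 1} + #{v | f v = 2} :=
      (card_union_le _ _).trans (by gcongr; exact card_union_le _ _)
    _ ≤ _ := by nlinarith

theorem IsRDF.two_mul_card_le [Fintype V] (hf : IsRDF G f) {d : ℕ} (hd₁ : 1 ≤ d)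
    (hd : ∀ v, deg G v ≤ d) : 2 * Fintype.card V ≤ (d + 1) * ∑ v, f v := by
  rw [hf.sum_eq]
  nlinarith [hf.card_le hd]

def IsUndominated (G : SimpleGraph V) (f : V → ℕ) (v : V) : Prop :=
  f v = 0 ∧ ∀ u, G.Adj v u → f u ≠ 2

open Classical in
noncomputable def fillUndominated (G : SimpleGraph V) (f : V → ℕ) (v : V) : ℕ :=
  if IsUndominated G f v then 1 else f v

theorem isRDF_fillUndominated (hf : ∀ v, f v ≤ 2) : IsRDF G (fillUndominated G f) := by
  classical
  refine ⟨fun v => ?_, fun v hv => ?_⟩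
  · unfold fillUndominated
    split_ifs
    exacts [one_le_two, hf v]
  · have hund : ¬IsUndominated G f v := fun h => by simp [fillUndominated, h] at hv
    have hfv : f v = 0 := by simpa [fillUndominated, hund] using hv
    obtain ⟨u, hvu, hu⟩ : ∃ u, G.Adj v u ∧ f u = 2 := by
      simpa [IsUndominated, hfv] using hund
    refine ⟨u, hvu, ?_⟩
    have : ¬IsUndominated G f u := fun h => by simp [h.1] at hu
    simp [fillUndominated, this, hu]

open Classical in
theorem sum_fillUndominated [Fintype V] :
    ∑ v, fillUndominated G f v = ∑ v, f v + #{v | IsUndominated G f v} := by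
  rw [card_filter, ← sum_add_distrib]
  refine sum_congr rfl fun v _ => ?_
  unfold fillUndominated
  split_ifs with h
  · simp [h.1]
  · simp

theorem romanDom_eq [Fintype V] {k : ℕ}
    (hf : IsRDF G f) (hfk : ∑ v, f v = k) (hmin : ∀ g, IsRDF G g → k ≤ ∑ v, g v) :
    romanDom G = k := by
  have hk : k ∈ {k | ∃ f : V → ℕ, IsRDF G f ∧ ∑ v, f v = k} := ⟨f, hf, hfk⟩
  refine le_antisymm (Nat.sInf_le hk) ?_
  obtain ⟨g, hg, hgk⟩ := Nat.sInf_mem ⟨k, hk⟩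
  exact (hmin g hg).trans_eq hgk

end RomanDomination

abbrev ladder (n : ℕ) : SimpleGraph (Fin 2 × Fin n) := pathGraph 2 □ pathGraph n

theorem deg_ladder_le {n : ℕ} (v : Fin 2 × Fin n) : deg (ladder n) v ≤ n := by
  classical
  have h₁ := (pathGraph 2).degree_lt_card_verts v.1
  have h₂ := (pathGraph n).degree_lt_card_verts v.2
  rw [Fintype.card_fin] at h₁ h₂
  rw [deg, Set.ncard_eq_toFinset_card', ← neighborFinset_def, card_neighborFinset_eq_degree,
    degree_boxProd]
  omega

theorem IsRDF.ladder_sum_ge_of_le_two {n : ℕ} (hn₁ : 1 ≤ n) (hn₂ : n ≤ 2)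
    {f : Fin 2 × Fin n → ℕ} (hf : IsRDF (ladder n) f) : n + 1 ≤ ∑ v, f v := by
  have := hf.two_mul_card_le hn₁ deg_ladder_le
  rw [Fintype.card_prod, Fintype.card_fin, Fintype.card_fin] at this
  interval_cases n <;> omega

section DropLastTwo

variable {m : ℕ} {f : Fin 2 × Fin (m + 2) → ℕ}

def dropLastTwo (f : Fin 2 × Fin (m + 2) → ℕ) (v : Fin 2 × Fin m) : ℕ :=
  f (v.1, v.2.castSucc.castSucc)

theorem sum_eq_sum_dropLastTwo_add :
    ∑ v, f v = ∑ v, dropLastTwo f v +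
      ∑ i, (f (i, (Fin.last m).castSucc) + f (i, Fin.last (m + 1))) := by
  simp only [Fintype.sum_prod_type, dropLastTwo, ← sum_add_distrib]
  refine sum_congr rfl fun i _ => ?_
  rw [Fin.sum_univ_castSucc, Fin.sum_univ_castSucc, add_assoc]

theorem IsRDF.isUndominated_dropLastTwo (hf : IsRDF (ladder (m + 2)) f) {i : Fin 2} {j : Fin m}
    (hij : IsUndominated (ladder m) (dropLastTwo f) (i, j)) :
    j.val + 1 = m ∧ f (i, (Fin.last m).castSucc) = 2 := by
  obtain ⟨⟨i', j'⟩, hadj, hu⟩ := hf.2 _ hij.1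
  by_cases hj' : j'.val < m
  · refine absurd hu (hij.2 (i', ⟨j', hj'⟩) ?_)
    simpa [boxProd_adj, pathGraph_adj, Fin.ext_iff] using hadj
  · have hj := j.isLt
    simp only [boxProd_adj, pathGraph_adj, Fin.ext_iff, Fin.val_castSucc] at hadj
    obtain rfl : i' = i := by omega
    obtain rfl : j' = (Fin.last m).castSucc := by ext; simp; omega
    exact ⟨by omega, hu⟩

open Classical in
theorem IsRDF.card_isUndominated_dropLastTwo_le (hf : IsRDF (ladder (m + 2)) f) :
    #{v | IsUndominated (ladder m) (dropLastTwo f) v} ≤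
      #{i | f (i, (Fin.last m).castSucc) = 2} := by
  refine card_le_card_of_injOn Prod.fst (fun v hv => ?_) (fun v hv w hw hvw => ?_)
  · simpa using (hf.isUndominated_dropLastTwo (mem_filter.1 hv).2).2
  · have hv' := hf.isUndominated_dropLastTwo (mem_filter.1 hv).2
    have hw' := hf.isUndominated_dropLastTwo (mem_filter.1 hw).2
    exact Prod.ext hvw (Fin.ext (by omega))

theorem IsRDF.card_two_add_two_le_sum_lastTwo (hf : IsRDF (ladder (m + 2)) f) :
    #{i | f (i, (Fin.last m).castSucc) = 2} + 2 ≤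
      ∑ i, (f (i, (Fin.last m).castSucc) + f (i, Fin.last (m + 1))) := by
  have hdom (i i' : Fin 2) (hii' : i ≠ i') (h0 : f (i, Fin.last (m + 1)) = 0) :
      f (i', Fin.last (m + 1)) = 2 ∨ f (i, (Fin.last m).castSucc) = 2 := by
    obtain ⟨⟨k, j⟩, hadj, hu⟩ := hf.2 _ h0
    have := j.isLt
    rw [ne_eq, Fin.ext_iff] at hii'
    simp only [boxProd_adj, pathGraph_adj, Fin.ext_iff, Fin.val_last] at hadj
    rcases hadj with ⟨hk, hj⟩ | ⟨hj, hk⟩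
    · obtain rfl : k = i' := by ext; omega
      obtain rfl : j = Fin.last (m + 1) := by ext; simp; omega
      exact .inl hu
    · obtain rfl : k = i := by ext; omega
      obtain rfl : j = (Fin.last m).castSucc := by ext; simp; omega
      exact .inr hu
  have h₀ := hdom 0 1 (by decide)
  have h₁ := hdom 1 0 (by decide)
  simp only [card_filter, Fin.sum_univ_two]
  have := hf.1 (0, (Fin.last m).castSucc)
  have := hf.1 (1, (Fin.last m).castSucc)
  have := hf.1 (0, Fin.last (m + 1))
  have := hf.1 (1, Fin.last (m + 1))
  split_ifs <;> omega

end DropLastTwo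

theorem IsRDF.exists_ladder_sum_add_two_le {m : ℕ} {f : Fin 2 × Fin (m + 2) → ℕ}
    (hf : IsRDF (ladder (m + 2)) f) :
    ∃ g : Fin 2 × Fin m → ℕ, IsRDF (ladder m) g ∧ ∑ v, g v + 2 ≤ ∑ v, f v := by
  classical
  refine ⟨fillUndominated (ladder m) (dropLastTwo f),
    isRDF_fillUndominated fun v => hf.1 _, ?_⟩
  rw [sum_fillUndominated, sum_eq_sum_dropLastTwo_add]
  have := hf.card_isUndominated_dropLastTwo_le
  have := hf.card_two_add_two_le_sum_lastTwo
  omega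

theorem IsRDF.ladder_sum_ge {n : ℕ} (hn : 1 ≤ n) {f : Fin 2 × Fin n → ℕ}
    (hf : IsRDF (ladder n) f) : n + 1 ≤ ∑ v, f v := by
  induction n using Nat.strong_induction_on with
  | _ n ih =>
    rcases le_or_gt n 2 with hn₂ | hn₂
    · exact hf.ladder_sum_ge_of_le_two hn hn₂
    · obtain ⟨m, rfl⟩ : ∃ m, n = m + 2 := ⟨n - 2, by omega⟩
      obtain ⟨g, hg, hsum⟩ := hf.exists_ladder_sum_add_two_le
      have := ih m (by omega) (by omega) hg
      omega

/-- The `2`s sit on the even columns in alternating rows; for even `n`, the last column gets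
a `1` in the row where column `n` would carry its `2`. -/
def ladderRDF (n : ℕ) (v : Fin 2 × Fin n) : ℕ :=
  if v.2.val % 2 = 0 ∧ v.1.val = v.2.val / 2 % 2 then 2
  else if v.2.val + 1 = n ∧ n % 2 = 0 ∧ v.1.val = n / 2 % 2 then 1 else 0

theorem ladderRDF_eq_two {n : ℕ} {i : Fin 2} {j : Fin n}
    (h : j.val % 2 = 0 ∧ i.val = j.val / 2 % 2) : ladderRDF n (i, j) = 2 :=
  if_pos h

theorem isRDF_ladderRDF (n : ℕ) : IsRDF (ladder n) (ladderRDF n) := by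
  refine ⟨fun v => by unfold ladderRDF; split_ifs <;> omega, fun ⟨i, j⟩ h0 => ?_⟩
  have hi := i.isLt
  have hj := j.isLt
  simp only [ladderRDF] at h0
  by_cases hj2 : j.val % 2 = 0
  · have hrow : i.val ≠ j.val / 2 % 2 := by split_ifs at h0; omega
    exact ⟨(⟨j.val / 2 % 2, by omega⟩, j),
      boxProd_adj.2 (.inl ⟨pathGraph_adj.2 (by simp only; omega), rfl⟩),
      ladderRDF_eq_two ⟨hj2, rfl⟩⟩
  by_cases hprev : i.val = (j.val - 1) / 2 % 2
  · exact ⟨(i, ⟨j.val - 1, by omega⟩),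
      boxProd_adj.2 (.inr ⟨pathGraph_adj.2 (.inr (by simp only; omega)), rfl⟩),
      ladderRDF_eq_two ⟨by simp only; omega, hprev⟩⟩
  · have hnext : j.val + 1 < n := by split_ifs at h0; omega
    exact ⟨(i, ⟨j.val + 1, hnext⟩),
      boxProd_adj.2 (.inr ⟨pathGraph_adj.2 (.inl rfl), rfl⟩),
      ladderRDF_eq_two ⟨by simp only; omega, by simp only; omega⟩⟩

theorem sum_ladderRDF {n : ℕ} (hn : 1 ≤ n) : ∑ v, ladderRDF n v = n + 1 := by
  have hcol (j : Fin n) : ∑ i : Fin 2, ladderRDF n (i, j) =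
      (if j.val % 2 = 0 then 2 else 0) + if j.val + 1 = n ∧ n % 2 = 0 then 1 else 0 := by
    simp only [Fin.sum_univ_two, ladderRDF, Fin.val_zero, Fin.val_one]
    split_ifs <;> omega
  have heven (k : ℕ) : ∑ j ∈ range k, (if j % 2 = 0 then 2 else 0) = 2 * ((k + 1) / 2) := by
    induction k with
    | zero => rfl
    | succ k ih => rw [sum_range_succ, ih]; split_ifs <;> omega
  obtain ⟨m, rfl⟩ : ∃ m, n = m + 1 := ⟨n - 1, by omega⟩
  have hlast : ∑ j ∈ range (m + 1), (if j + 1 = m + 1 ∧ (m + 1) % 2 = 0 then 1 else 0) =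
      if (m + 1) % 2 = 0 then 1 else 0 := by
    rw [sum_range_succ, sum_eq_zero fun j hj => if_neg (by simp at hj; omega)]
    simp
  rw [Fintype.sum_prod_type_right, Finset.sum_congr rfl fun j _ => hcol j,
    Fin.sum_univ_eq_sum_range (fun j => (if j % 2 = 0 then 2 else 0) +
      if j + 1 = m + 1 ∧ (m + 1) % 2 = 0 then 1 else 0), sum_add_distrib, heven, hlast]
  split_ifs <;> omega

theorem stmt16 (n : ℕ) (hn : 1 ≤ n) :
    romanDom (SimpleGraph.pathGraph 2 □ SimpleGraph.pathGraph n) = n + 1 :=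
  romanDom_eq (isRDF_ladderRDF n) (sum_ladderRDF hn) fun _ hg => hg.ladder_sum_ge hn
end
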